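/- Let U be a 2×2 complex unitary matrix. The controlled-U gate is control-symmetric, i.e. E₀ ⊗ₖ I₂ + E₁ ⊗ₖ U = I₂ ⊗ₖ E₀ + U ⊗ₖ E₁ (as 4×4 complex matrices), if and only if there exists a real number φ such that U is the diagonal matrix diag(1, exp(iφ)) (a phase gate). -/

import Mathlib

/-!
Comparing the entries of the two 4×4 matrices in the rows and columns indexed by `|01⟩` and `|11⟩`
shows that control-symmetry says exactly `U = diag(1, u)` with `u = U 1 1`; for such a `U`,
unitarity says `|u| = 1`, i.e. `u = exp(iφ)`.
-/

open Matrix Kronecker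

section ControlledGate

variable {R : Type*} [Semiring R]

def controlledGate (U : Matrix (Fin 2) (Fin 2) R) : Matrix (Fin 2 × Fin 2) (Fin 2 × Fin 2) R :=
  !![1, 0; 0, 0] ⊗ₖ 1 + !![0, 0; 0, 1] ⊗ₖ U

def reverseControlledGate (U : Matrix (Fin 2) (Fin 2) R) :
    Matrix (Fin 2 × Fin 2) (Fin 2 × Fin 2) R :=
  1 ⊗ₖ !![1, 0; 0, 0] + U ⊗ₖ !![0, 0; 0, 1]

def phaseGate (u : R) : Matrix (Fin 2) (Fin 2) R :=
  !![1, 0; 0, u]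

theorem controlledGate_eq_reverseControlledGate_iff (U : Matrix (Fin 2) (Fin 2) R) :
    controlledGate U = reverseControlledGate U ↔ U = phaseGate (U 1 1) := by
  constructor
  · intro h
    have h00 := congrFun (congrFun h (0, 1)) (0, 1)
    have h01 := congrFun (congrFun h (0, 1)) (1, 1)
    have h10 := congrFun (congrFun h (1, 1)) (0, 1)
    simp [controlledGate, reverseControlledGate, kroneckerMap_apply] at h00 h01 h10
    ext i j
    fin_cases i <;> fin_cases j <;> simp [phaseGate, ← h00, ← h01, ← h10]
  · intro h
    rw [h]
    ext ⟨i, k⟩ ⟨j, l⟩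
    fin_cases i <;> fin_cases j <;> fin_cases k <;> fin_cases l <;>
      simp [controlledGate, reverseControlledGate, phaseGate, kroneckerMap_apply]

end ControlledGate

theorem norm_eq_one_of_phaseGate_conjTranspose_mul_self {u : ℂ}
    (h : (phaseGate u)ᴴ * phaseGate u = 1) : ‖u‖ = 1 := by
  have h11 : ((‖u‖ ^ 2 : ℝ) : ℂ) = 1 := by
    simpa [phaseGate, mul_apply, Fin.sum_univ_two, Complex.conj_mul'] using
      congrFun (congrFun h 1) 1
  exact (pow_eq_one_iff_of_nonneg (norm_nonneg u) two_ne_zero).1 (mod_cast h11)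

/-- A controlled-`U` gate (for `U` a 2×2 unitary) is control-symmetric,
i.e. `E₀ ⊗ₖ I₂ + E₁ ⊗ₖ U = I₂ ⊗ₖ E₀ + U ⊗ₖ E₁`, if and only if `U` is a phase gate
`diag(1, exp(iφ))` for some real `φ`. -/
theorem controlled_gate_control_symmetric_iff_phase
    (U : Matrix (Fin 2) (Fin 2) ℂ)
    (hU : U * Uᴴ = 1 ∧ Uᴴ * U = 1) :
    ((!![1, 0; 0, 0] : Matrix (Fin 2) (Fin 2) ℂ) ⊗ₖ (1 : Matrix (Fin 2) (Fin 2) ℂ)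
        + (!![0, 0; 0, 1] : Matrix (Fin 2) (Fin 2) ℂ) ⊗ₖ U
      = (1 : Matrix (Fin 2) (Fin 2) ℂ) ⊗ₖ (!![1, 0; 0, 0] : Matrix (Fin 2) (Fin 2) ℂ)
        + U ⊗ₖ (!![0, 0; 0, 1] : Matrix (Fin 2) (Fin 2) ℂ))
    ↔ ∃ φ : ℝ, U = !![1, 0; 0, Complex.exp (φ * Complex.I)] := by
  refine (controlledGate_eq_reverseControlledGate_iff U).trans ⟨fun hphase => ?_, ?_⟩
  · have hunit : ‖U 1 1‖ = 1 :=
      norm_eq_one_of_phaseGate_conjTranspose_mul_self (hphase ▸ hU.2)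
    obtain ⟨φ, hφ⟩ := (Complex.norm_eq_one_iff _).1 hunit
    exact ⟨φ, hφ ▸ hphase⟩
  · rintro ⟨φ, rfl⟩
    simp [phaseGate]
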